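/- Let H be a commutative Hopf algebra over a commutative ring R with antipode S. The right Maurer–Cartan map ω^R : X ↦ X ⋆ S restricts to a bijection from the space of derivations of H (linear maps X with X ∘ μ = μ ∘ (X ⊗ id + id ⊗ X)) onto the space of H-valued ε-derivations (linear maps ξ : H → H with ξ ∘ μ = ξ ⊗ ε + ε ⊗ ξ, where (ξ ⊗ ε)(f ⊗ g) = ξ(f)ε(g)); its inverse is ξ ↦ ξ ⋆ id. In particular: (i) if X is a derivation then X ⋆ S is an H-valued ε-derivation, and (ii) if ξ is an H-valued ε-derivation then ξ ⋆ id is a derivation of H. -/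

import Mathlib

open TensorProduct

section

variable {R H : Type*} [CommRing R] [CommRing H] [HopfAlgebra R H]

/-- The convolution product of linear endomorphisms: `a ⋆ b = μ ∘ (a ⊗ b) ∘ Δ`. -/
noncomputable def conv (a b : H →ₗ[R] H) : H →ₗ[R] H :=
  LinearMap.mul' R H ∘ₗ TensorProduct.map a b ∘ₗ Coalgebra.comul

/-- A derivation of `H`: `X ∘ μ = μ ∘ (X ⊗ id + id ⊗ X)`. -/
def IsDerivation (X : H →ₗ[R] H) : Prop :=
  X ∘ₗ LinearMap.mul' R H =
    LinearMap.mul' R H ∘ₗ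
      (TensorProduct.map X LinearMap.id + TensorProduct.map LinearMap.id X)

/-- An `H`-valued `ε`-derivation: `ξ(fg) = ε(g)•ξ(f) + ε(f)•ξ(g)`. -/
def IsEpsDerivationH (ξ : H →ₗ[R] H) : Prop :=
  ∀ f g : H,
    ξ (f * g) = Coalgebra.counit (R := R) g • ξ f + Coalgebra.counit (R := R) f • ξ g

lemma conv_repr (a b : H →ₗ[R] H) {x : H} {ι : Type*} (r : Coalgebra.Repr R x ι) :
    conv a b x = ∑ i ∈ r.index, a (r.left i) * b (r.right i) := by
  have : conv a b x = LinearMap.mul' R H (TensorProduct.map a b (Coalgebra.comul x)) := rfl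
  rw [this, ← r.eq, map_sum, map_sum]
  simp [LinearMap.mul'_apply]

lemma repr_sum_counit_smul {x : H} {ι : Type*} (r : Coalgebra.Repr R x ι) :
    ∑ i ∈ r.index, Coalgebra.counit (R := R) (r.left i) • r.right i = x := by
  have h := congrArg (TensorProduct.lid R H) (Coalgebra.sum_counit_tmul_eq r)
  rw [map_sum] at h
  simp only [TensorProduct.lid_tmul, one_smul] at h
  exact h

lemma repr_sum_smul_counit {x : H} {ι : Type*} (r : Coalgebra.Repr R x ι) :
    ∑ i ∈ r.index, Coalgebra.counit (R := R) (r.right i) • r.left i = x := by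
  have h := congrArg (TensorProduct.rid R H) (Coalgebra.sum_tmul_counit_eq r)
  rw [map_sum] at h
  simp only [TensorProduct.rid_tmul, one_smul] at h
  exact h

noncomputable def mulRepr {f g : H} {ι κ : Type*} (rf : Coalgebra.Repr R f ι)
    (rg : Coalgebra.Repr R g κ) :
    Coalgebra.Repr R (f * g) (ι × κ) where
  index := rf.index ×ˢ rg.index
  left p := rf.left p.1 * rg.left p.2
  right p := rf.right p.1 * rg.right p.2
  eq := by
    show _ = Coalgebra.comul (f * g)
    rw [Finset.sum_product, Bialgebra.comul_mul (R := R) f g, ← rf.eq, ← rg.eq,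
      Finset.sum_mul_sum]
    simp [Algebra.TensorProduct.tmul_mul_tmul]

lemma conv_mul_repr (a b : H →ₗ[R] H) {f g : H} {ι κ : Type*} (rf : Coalgebra.Repr R f ι)
    (rg : Coalgebra.Repr R g κ) :
    conv a b (f * g) = ∑ i ∈ rf.index, ∑ j ∈ rg.index,
      a (rf.left i * rg.left j) * b (rf.right i * rg.right j) := by
  have h0 : conv a b (f * g)
      = LinearMap.mul' R H (TensorProduct.map a b (Coalgebra.comul (f * g))) := rfl
  rw [h0, Bialgebra.comul_mul, ← rf.eq, ← rg.eq, Finset.sum_mul_sum]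
  rw [map_sum, map_sum]
  refine Finset.sum_congr rfl fun i _ => ?_
  rw [map_sum, map_sum]
  refine Finset.sum_congr rfl fun j _ => ?_
  rw [Algebra.TensorProduct.tmul_mul_tmul]
  simp [LinearMap.mul'_apply]

lemma sum_sum_antipode_mul {f g : H} {ι κ : Type*} (rf : Coalgebra.Repr R f ι)
    (rg : Coalgebra.Repr R g κ) :
    ∑ i ∈ rf.index, ∑ j ∈ rg.index,
        HopfAlgebra.antipode (R := R) (rf.left i * rg.left j) * (rf.right i * rg.right j)
      = algebraMap R H (Coalgebra.counit (R := R) (f * g)) := by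
  have h1 : ∑ p ∈ rf.index ×ˢ rg.index,
      HopfAlgebra.antipode (R := R) (rf.left p.1 * rg.left p.2)
        * (rf.right p.1 * rg.right p.2)
      = algebraMap R H (Coalgebra.counit (R := R) (f * g)) :=
    HopfAlgebra.sum_antipode_mul_eq_algebraMap_counit (mulRepr rf rg)
  rw [Finset.sum_product] at h1
  exact h1

noncomputable def convUnit : H →ₗ[R] H :=
  Algebra.linearMap R H ∘ₗ Coalgebra.counit

lemma conv_convUnit (a : H →ₗ[R] H) : conv a (convUnit (R := R)) = a := by
  ext x
  set r := Coalgebra.Repr.arbitrary R x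
  rw [conv_repr a (convUnit (R := R)) r]
  have : ∀ i ∈ r.index, a (r.left i) * convUnit (R := R) (r.right i)
      = a (Coalgebra.counit (R := R) (r.right i) • r.left i) := by
    intro i _
    rw [map_smul]
    simp [convUnit, Algebra.smul_def, mul_comm]
  rw [Finset.sum_congr rfl this, ← map_sum, repr_sum_smul_counit r]

lemma conv_assoc (a b c : H →ₗ[R] H) : conv (conv a b) c = conv a (conv b c) := by
  ext x
  set r := Coalgebra.Repr.arbitrary R x with hr
  set r1 : ∀ i : r.ι, Coalgebra.Repr R (r.left i) (H × H) := fun i => Coalgebra.Repr.arbitrary R _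
  set r2 : ∀ i : r.ι, Coalgebra.Repr R (r.right i) (H × H) := fun i => Coalgebra.Repr.arbitrary R _
  have key := congrArg (LinearMap.mul' R H ∘ₗ
      TensorProduct.map a (LinearMap.mul' R H ∘ₗ TensorProduct.map b c))
    (Coalgebra.sum_tmul_tmul_eq r r1 r2)
  simp only [map_sum, LinearMap.comp_apply, TensorProduct.map_tmul,
    LinearMap.mul'_apply] at key
  calc conv (conv a b) c x
      = ∑ i ∈ r.index, (∑ j ∈ (r1 i).index, a ((r1 i).left j) * b ((r1 i).right j))
          * c (r.right i) := by
        rw [conv_repr _ c r]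
        exact Finset.sum_congr rfl fun i _ => by rw [conv_repr a b (r1 i)]
    _ = ∑ i ∈ r.index, ∑ j ∈ (r1 i).index,
          a ((r1 i).left j) * (b ((r1 i).right j) * c (r.right i)) := by
        simp [Finset.sum_mul, mul_assoc]
    _ = ∑ i ∈ r.index, ∑ j ∈ (r2 i).index,
          a (r.left i) * (b ((r2 i).left j) * c ((r2 i).right j)) := key
    _ = conv a (conv b c) x := by
        rw [conv_repr a _ r]
        exact (Finset.sum_congr rfl fun i _ => by
          rw [conv_repr b c (r2 i), Finset.mul_sum]).symm

lemma conv_id_antipode :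
    conv (LinearMap.id : H →ₗ[R] H) (HopfAlgebra.antipode (R := R)) = convUnit := by
  ext x
  rw [conv_repr _ _ (Coalgebra.Repr.arbitrary R x)]
  simp [convUnit, HopfAlgebra.sum_mul_antipode_eq_algebraMap_counit]

lemma conv_antipode_id :
    conv (HopfAlgebra.antipode (R := R) : H →ₗ[R] H) LinearMap.id = convUnit := by
  ext x
  rw [conv_repr _ _ (Coalgebra.Repr.arbitrary R x)]
  simp [convUnit, HopfAlgebra.sum_antipode_mul_eq_algebraMap_counit]

lemma antipode_mul (f g : H) :
    HopfAlgebra.antipode (R := R) (f * g) =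
      HopfAlgebra.antipode (R := R) f * HopfAlgebra.antipode (R := R) g := by
  set S : H →ₗ[R] H := HopfAlgebra.antipode (R := R) with hS
  set rf := Coalgebra.Repr.arbitrary R f with hrf
  set rg := Coalgebra.Repr.arbitrary R g with hrg
  set rf1 : ∀ i : rf.ι, Coalgebra.Repr R (rf.left i) (H × H) :=
    fun i => Coalgebra.Repr.arbitrary R _ with hrf1
  set rf2 : ∀ i : rf.ι, Coalgebra.Repr R (rf.right i) (H × H) :=
    fun i => Coalgebra.Repr.arbitrary R _ with hrf2
  set rg1 : ∀ j : rg.ι, Coalgebra.Repr R (rg.left j) (H × H) :=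
    fun j => Coalgebra.Repr.arbitrary R _ with hrg1
  set rg2 : ∀ j : rg.ι, Coalgebra.Repr R (rg.right j) (H × H) :=
    fun j => Coalgebra.Repr.arbitrary R _ with hrg2
  have hf := Coalgebra.sum_tmul_tmul_eq rf rf1 rf2
  have hg := Coalgebra.sum_tmul_tmul_eq rg rg1 rg2
  set t22 : ∀ (i : rf.ι) (j : rg.ι), (rf2 i).ι → (rg2 j).ι → H := fun i j k l =>
    S (rf.left i * rg.left j) *
      (((rf2 i).left k * (rg2 j).left l) * (S ((rf2 i).right k) * S ((rg2 j).right l)))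
    with ht22
  set t12 : ∀ (i : rf.ι) (j : rg.ι), (rf1 i).ι → (rg2 j).ι → H := fun i j k l =>
    S ((rf1 i).left k * rg.left j) *
      (((rf1 i).right k * (rg2 j).left l) * (S (rf.right i) * S ((rg2 j).right l)))
    with ht12
  set t11 : ∀ (i : rf.ι) (j : rg.ι), (rf1 i).ι → (rg1 j).ι → H := fun i j k l =>
    S ((rf1 i).left k * (rg1 j).left l) *
      (((rf1 i).right k * (rg1 j).right l) * (S (rf.right i) * S (rg.right j)))
    with ht11
  -- step B : apply T to hf
  have hB : ∀ (y₁ y₂ y₃ : H),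
      ∑ i ∈ rf.index, ∑ k ∈ (rf1 i).index,
        S ((rf1 i).left k * y₁) * (((rf1 i).right k * y₂) * (S (rf.right i) * S y₃))
      = ∑ i ∈ rf.index, ∑ k ∈ (rf2 i).index,
        S (rf.left i * y₁) * (((rf2 i).left k * y₂) * (S ((rf2 i).right k) * S y₃)) := by
    intro y₁ y₂ y₃
    have h := congrArg (LinearMap.mul' R H ∘ₗ TensorProduct.map
      (S ∘ₗ LinearMap.mulRight R y₁)
      (LinearMap.mul' R H ∘ₗ TensorProduct.map (LinearMap.mulRight R y₂)
        (LinearMap.mulRight R (S y₃) ∘ₗ S))) hf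
    simpa only [map_sum, LinearMap.comp_apply, TensorProduct.map_tmul,
      LinearMap.mul'_apply, LinearMap.mulRight_apply] using h
  -- step C : apply U to hg
  have hC : ∀ (x₁ x₂ x₃ : H),
      ∑ j ∈ rg.index, ∑ l ∈ (rg1 j).index,
        S (x₁ * (rg1 j).left l) * ((x₂ * (rg1 j).right l) * (S x₃ * S (rg.right j)))
      = ∑ j ∈ rg.index, ∑ l ∈ (rg2 j).index,
        S (x₁ * rg.left j) * ((x₂ * (rg2 j).left l) * (S x₃ * S ((rg2 j).right l))) := by
    intro x₁ x₂ x₃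
    have h := congrArg (LinearMap.mul' R H ∘ₗ TensorProduct.map
      (S ∘ₗ LinearMap.mulLeft R x₁)
      (LinearMap.mul' R H ∘ₗ TensorProduct.map (LinearMap.mulLeft R x₂)
        (LinearMap.mulLeft R (S x₃) ∘ₗ S))) hg
    simpa only [map_sum, LinearMap.comp_apply, TensorProduct.map_tmul,
      LinearMap.mul'_apply, LinearMap.mulLeft_apply] using h
  calc S (f * g)
      = ∑ i ∈ rf.index, ∑ j ∈ rg.index,
          (Coalgebra.counit (R := R) (rf.right i) * Coalgebra.counit (R := R) (rg.right j))
            • S (rf.left i * rg.left j) := by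
        conv_lhs => rw [← repr_sum_smul_counit rf, ← repr_sum_smul_counit rg]
        rw [Finset.sum_mul_sum, map_sum]
        refine Finset.sum_congr rfl fun i _ => ?_
        rw [map_sum]
        refine Finset.sum_congr rfl fun j _ => ?_
        rw [smul_mul_assoc, mul_smul_comm, smul_smul, map_smul]
    _ = ∑ i ∈ rf.index, ∑ j ∈ rg.index, ∑ k ∈ (rf2 i).index, ∑ l ∈ (rg2 j).index,
          t22 i j k l := by
        refine Finset.sum_congr rfl fun i _ => Finset.sum_congr rfl fun j _ => ?_
        have inner : ∑ k ∈ (rf2 i).index, ∑ l ∈ (rg2 j).index,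
            ((rf2 i).left k * (rg2 j).left l)
              * (S ((rf2 i).right k) * S ((rg2 j).right l))
            = (∑ k ∈ (rf2 i).index, (rf2 i).left k * S ((rf2 i).right k))
              * (∑ l ∈ (rg2 j).index, (rg2 j).left l * S ((rg2 j).right l)) := by
          rw [Finset.sum_mul_sum]
          exact Finset.sum_congr rfl fun k _ => Finset.sum_congr rfl fun l _ => by ring
        calc (Coalgebra.counit (R := R) (rf.right i) * Coalgebra.counit (R := R) (rg.right j))
              • S (rf.left i * rg.left j)
            = S (rf.left i * rg.left j) *
                ((Coalgebra.counit (R := R) (rf.right i) • (1 : H))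
                  * (Coalgebra.counit (R := R) (rg.right j) • (1 : H))) := by
              rw [smul_mul_smul_comm, mul_one, mul_smul_comm, mul_one]
          _ = S (rf.left i * rg.left j) *
                ((∑ k ∈ (rf2 i).index, (rf2 i).left k * S ((rf2 i).right k))
                  * (∑ l ∈ (rg2 j).index, (rg2 j).left l * S ((rg2 j).right l))) := by
              rw [HopfAlgebra.sum_mul_antipode_eq_smul (rf2 i),
                HopfAlgebra.sum_mul_antipode_eq_smul (rg2 j)]
          _ = _ := by
              rw [← inner, Finset.mul_sum]
              refine Finset.sum_congr rfl fun k _ => ?_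
              rw [Finset.mul_sum]
    _ = ∑ j ∈ rg.index, ∑ i ∈ rf.index, ∑ k ∈ (rf2 i).index, ∑ l ∈ (rg2 j).index,
          t22 i j k l := Finset.sum_comm
    _ = ∑ j ∈ rg.index, ∑ i ∈ rf.index, ∑ l ∈ (rg2 j).index, ∑ k ∈ (rf2 i).index,
          t22 i j k l :=
        Finset.sum_congr rfl fun j _ => Finset.sum_congr rfl fun i _ => Finset.sum_comm
    _ = ∑ j ∈ rg.index, ∑ l ∈ (rg2 j).index, ∑ i ∈ rf.index, ∑ k ∈ (rf2 i).index,
          t22 i j k l :=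
        Finset.sum_congr rfl fun j _ => Finset.sum_comm
    _ = ∑ j ∈ rg.index, ∑ l ∈ (rg2 j).index, ∑ i ∈ rf.index, ∑ k ∈ (rf1 i).index,
          t12 i j k l := by
        refine Finset.sum_congr rfl fun j _ => Finset.sum_congr rfl fun l _ => ?_
        exact (hB (rg.left j) ((rg2 j).left l) ((rg2 j).right l)).symm
    _ = ∑ j ∈ rg.index, ∑ i ∈ rf.index, ∑ l ∈ (rg2 j).index, ∑ k ∈ (rf1 i).index,
          t12 i j k l :=
        Finset.sum_congr rfl fun j _ => Finset.sum_comm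
    _ = ∑ j ∈ rg.index, ∑ i ∈ rf.index, ∑ k ∈ (rf1 i).index, ∑ l ∈ (rg2 j).index,
          t12 i j k l :=
        Finset.sum_congr rfl fun j _ => Finset.sum_congr rfl fun i _ => Finset.sum_comm
    _ = ∑ i ∈ rf.index, ∑ j ∈ rg.index, ∑ k ∈ (rf1 i).index, ∑ l ∈ (rg2 j).index,
          t12 i j k l := Finset.sum_comm
    _ = ∑ i ∈ rf.index, ∑ k ∈ (rf1 i).index, ∑ j ∈ rg.index, ∑ l ∈ (rg2 j).index,
          t12 i j k l :=
        Finset.sum_congr rfl fun i _ => Finset.sum_comm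
    _ = ∑ i ∈ rf.index, ∑ k ∈ (rf1 i).index, ∑ j ∈ rg.index, ∑ l ∈ (rg1 j).index,
          t11 i j k l := by
        refine Finset.sum_congr rfl fun i _ => Finset.sum_congr rfl fun k _ => ?_
        exact (hC ((rf1 i).left k) ((rf1 i).right k) (rf.right i)).symm
    _ = ∑ i ∈ rf.index, ∑ j ∈ rg.index, ∑ k ∈ (rf1 i).index, ∑ l ∈ (rg1 j).index,
          t11 i j k l :=
        Finset.sum_congr rfl fun i _ => Finset.sum_comm
    _ = ∑ i ∈ rf.index, ∑ j ∈ rg.index,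
          (Coalgebra.counit (R := R) (rf.left i) * Coalgebra.counit (R := R) (rg.left j))
            • (S (rf.right i) * S (rg.right j)) := by
        refine Finset.sum_congr rfl fun i _ => Finset.sum_congr rfl fun j _ => ?_
        have inner : ∑ k ∈ (rf1 i).index, ∑ l ∈ (rg1 j).index, t11 i j k l
            = (∑ k ∈ (rf1 i).index, ∑ l ∈ (rg1 j).index,
                S ((rf1 i).left k * (rg1 j).left l) * ((rf1 i).right k * (rg1 j).right l))
              * (S (rf.right i) * S (rg.right j)) := by
          rw [Finset.sum_mul]
          refine Finset.sum_congr rfl fun k _ => ?_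
          rw [Finset.sum_mul]
          exact Finset.sum_congr rfl fun l _ => by simp only [ht11]; ring
        rw [inner, sum_sum_antipode_mul (rf1 i) (rg1 j), Bialgebra.counit_mul,
          Algebra.smul_def, map_mul]
    _ = HopfAlgebra.antipode (R := R) f * HopfAlgebra.antipode (R := R) g := by
        conv_rhs => rw [← repr_sum_counit_smul rf, ← repr_sum_counit_smul rg]
        rw [map_sum, map_sum, Finset.sum_mul_sum]
        refine Finset.sum_congr rfl fun i _ => Finset.sum_congr rfl fun j _ => ?_
        rw [map_smul, map_smul, smul_mul_smul_comm]

lemma eps_of_deriv (X : H →ₗ[R] H) (hX : IsDerivation X) :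
    IsEpsDerivationH (conv X (HopfAlgebra.antipode (R := R))) := by
  intro f g
  set S : H →ₗ[R] H := HopfAlgebra.antipode (R := R) with hS
  set rf := Coalgebra.Repr.arbitrary R f
  set rg := Coalgebra.Repr.arbitrary R g
  have hXd : ∀ a b : H, X (a * b) = X a * b + a * X b := by
    intro a b
    have := LinearMap.congr_fun hX (a ⊗ₜ[R] b)
    simpa [LinearMap.mul'_apply] using this
  rw [conv_mul_repr X S rf rg]
  have step : ∀ i ∈ rf.index, ∀ j ∈ rg.index,
      X (rf.left i * rg.left j) * S (rf.right i * rg.right j)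
        = (X (rf.left i) * S (rf.right i)) * (rg.left j * S (rg.right j))
          + (rf.left i * S (rf.right i)) * (X (rg.left j) * S (rg.right j)) := by
    intro i _ j _
    rw [hXd, hS, antipode_mul, ← hS, add_mul]
    ring
  rw [Finset.sum_congr rfl fun i hi => Finset.sum_congr rfl fun j hj => step i hi j hj]
  rw [Finset.sum_congr rfl fun i (_ : i ∈ rf.index) => Finset.sum_add_distrib,
    Finset.sum_add_distrib]
  congr 1
  · rw [conv_repr X S rf, Finset.smul_sum]
    refine Finset.sum_congr rfl fun i _ => ?_
    rw [← Finset.mul_sum, HopfAlgebra.sum_mul_antipode_eq_smul rg, mul_smul_comm, mul_one]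
  · rw [conv_repr X S rg]
    have inner : ∀ i ∈ rf.index,
        ∑ j ∈ rg.index, (rf.left i * S (rf.right i)) * (X (rg.left j) * S (rg.right j))
          = (rf.left i * S (rf.right i)) * ∑ j ∈ rg.index, X (rg.left j) * S (rg.right j) := by
      intro i _
      rw [Finset.mul_sum]
    rw [Finset.sum_congr rfl inner, ← Finset.sum_mul,
      HopfAlgebra.sum_mul_antipode_eq_smul rf, smul_mul_assoc, one_mul]

lemma deriv_of_eps (ξ : H →ₗ[R] H) (hξ : IsEpsDerivationH ξ) :
    IsDerivation (conv ξ LinearMap.id) := by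
  unfold IsDerivation
  apply TensorProduct.ext'
  intro f g
  set X := conv ξ (LinearMap.id : H →ₗ[R] H) with hXdef
  set rf := Coalgebra.Repr.arbitrary R f
  set rg := Coalgebra.Repr.arbitrary R g
  have lhs : (X ∘ₗ LinearMap.mul' R H) (f ⊗ₜ[R] g) = X (f * g) := by
    simp [LinearMap.mul'_apply]
  have rhs : (LinearMap.mul' R H ∘ₗ
      (TensorProduct.map X LinearMap.id + TensorProduct.map LinearMap.id X)) (f ⊗ₜ[R] g)
      = X f * g + f * X g := by
    simp [LinearMap.mul'_apply]
  rw [lhs, rhs, hXdef, conv_mul_repr ξ LinearMap.id rf rg]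
  have step : ∀ i ∈ rf.index, ∀ j ∈ rg.index,
      ξ (rf.left i * rg.left j) * (LinearMap.id : H →ₗ[R] H) (rf.right i * rg.right j)
        = (ξ (rf.left i) * rf.right i)
              * ((Coalgebra.counit (R := R) (rg.left j) : R) • rg.right j)
          + ((Coalgebra.counit (R := R) (rf.left i) : R) • rf.right i)
              * (ξ (rg.left j) * rg.right j) := by
    intro i _ j _
    show ξ (rf.left i * rg.left j) * (rf.right i * rg.right j) = _
    rw [hξ, add_mul]
    simp only [smul_mul_assoc, mul_smul_comm]
    congr 1 <;> · congr 1; ring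
  rw [Finset.sum_congr rfl fun i hi => Finset.sum_congr rfl fun j hj => step i hi j hj]
  rw [Finset.sum_congr rfl fun i (_ : i ∈ rf.index) => Finset.sum_add_distrib,
    Finset.sum_add_distrib]
  congr 1
  · rw [conv_repr ξ LinearMap.id rf, Finset.sum_mul]
    refine Finset.sum_congr rfl fun i _ => ?_
    rw [← Finset.mul_sum, repr_sum_counit_smul rg]
    rfl
  · rw [conv_repr ξ LinearMap.id rg]
    have inner : ∀ i ∈ rf.index,
        ∑ j ∈ rg.index, ((Coalgebra.counit (R := R) (rf.left i) : R) • rf.right i)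
            * (ξ (rg.left j) * rg.right j)
          = ((Coalgebra.counit (R := R) (rf.left i) : R) • rf.right i)
              * ∑ j ∈ rg.index, ξ (rg.left j) * (LinearMap.id : H →ₗ[R] H) (rg.right j) := by
      intro i _
      rw [Finset.mul_sum]
      rfl
    rw [Finset.sum_congr rfl inner, ← Finset.sum_mul, repr_sum_counit_smul rf]

/-- For a commutative Hopf algebra `H`, the right Maurer–Cartan map
`ω^R : X ↦ X ⋆ S` restricts to a bijection from derivations of `H` onto `H`-valued
`ε`-derivations, with inverse `ξ ↦ ξ ⋆ id`. -/
theorem maurerCartan_bijection_derivations_epsDerivations :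
    (∀ X : H →ₗ[R] H, IsDerivation X →
        IsEpsDerivationH (conv X (HopfAlgebra.antipode (R := R)))) ∧
    (∀ ξ : H →ₗ[R] H, IsEpsDerivationH ξ → IsDerivation (conv ξ LinearMap.id)) ∧
    (∀ X : H →ₗ[R] H, IsDerivation X →
        conv (conv X (HopfAlgebra.antipode (R := R))) LinearMap.id = X) ∧
    (∀ ξ : H →ₗ[R] H, IsEpsDerivationH ξ →
        conv (conv ξ LinearMap.id) (HopfAlgebra.antipode (R := R)) = ξ) := by
  refine ⟨eps_of_deriv, deriv_of_eps, fun X _ => ?_, fun ξ _ => ?_⟩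
  · rw [conv_assoc, conv_antipode_id, conv_convUnit]
  · rw [conv_assoc, conv_id_antipode, conv_convUnit]

end
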